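/- arXiv:1910.02524 — 9 statements merged into one kernel-verified Lean document; each statement's English description precedes it below -/
import Mathlib

section
/- Let q be a power of an odd prime. If α is a generator of a Sylow 2-subgroup of the multiplicative group of the field F_{q²}, then the elements 1 and α form a basis of F_{q²} as a vector space over its subfield F_q. -/
/-- Let `q` be a power of an odd prime `p`. If `α` is a generator of a
Sylow 2-subgroup of the multiplicative group of the field `F` with `q ^ 2` elements,
then `1` and `α` form a basis of `F` as a vector space over its subfield `K`
with `q` elements. -/
theorem stmt0 {K F : Type*} [Field K] [Field F] [Algebra K F] [Fintype K] [Fintype F]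
    {p m q : ℕ} (hp : p.Prime) (hodd : Odd p) (hm : 0 < m) (hq : q = p ^ m)
    (hK : Fintype.card K = q) (hF : Fintype.card F = q ^ 2)
    (P : Sylow 2 Fˣ) (α : Fˣ) (hα : Subgroup.zpowers α = (P : Subgroup Fˣ)) :
    LinearIndependent K ![(1 : F), (α : F)] ∧
      Submodule.span K ({(1 : F), (α : F)} : Set F) = ⊤ := by
  haveI : Fact (Nat.Prime 2) := ⟨Nat.prime_two⟩
  have hq1 : 1 < q := by
    subst hq; exact Nat.one_lt_pow hm.ne' hp.one_lt
  have hqodd : Odd q := by subst hq; exact hodd.pow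
  -- finrank K F = 2
  have hrank : Module.finrank K F = 2 := by
    have h := Module.card_eq_pow_finrank (K := K) (V := F)
    rw [hF, hK] at h
    exact (Nat.pow_right_injective hq1 h.symm)
  -- order of α
  have horder : orderOf α = 2 ^ ((q ^ 2 - 1).factorization 2) := by
    rw [← Nat.card_zpowers, hα, Sylow.card_eq_multiplicity,
      Nat.card_units, Nat.card_eq_fintype_card, hF]
  -- key divisibility fact
  have hnotdvd : ¬ (2 ^ ((q ^ 2 - 1).factorization 2) ∣ q - 1) := by
    intro hdvd
    have hle : (q ^ 2 - 1).factorization 2 ≤ (q - 1).factorization 2 :=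
      (Nat.Prime.pow_dvd_iff_le_factorization Nat.prime_two (by omega)).mp hdvd
    have hfact : q ^ 2 - 1 = (q + 1) * (q - 1) := by
      have := sq_tsub_sq q 1
      simpa using this
    rw [hfact, Nat.factorization_mul (by omega) (by omega)] at hle
    have hpos : 0 < (q + 1).factorization 2 :=
      Nat.Prime.factorization_pos_of_dvd Nat.prime_two (by omega)
        (by obtain ⟨c, hc⟩ := hqodd; omega)
    simp only [Finsupp.add_apply] at hle
    omega
  -- α is not in the image of K
  have hnotin : (α : F) ∉ Set.range (algebraMap K F) := by
    rintro ⟨a, ha⟩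
    have ha0 : a ≠ 0 := by
      rintro rfl
      simp only [map_zero] at ha
      exact α.ne_zero ha.symm
    have hpow : (α : F) ^ (q - 1) = 1 := by
      rw [← ha, ← map_pow, ← hK, FiniteField.pow_card_sub_one_eq_one a ha0, map_one]
    have hpow' : α ^ (q - 1) = 1 := Units.ext (by simpa using hpow)
    have hdvd : orderOf α ∣ q - 1 := orderOf_dvd_of_pow_eq_one hpow'
    rw [horder] at hdvd
    exact hnotdvd hdvd
  have hli : LinearIndependent K ![(1 : F), (α : F)] := by
    refine linearIndependent_fin2.mpr ⟨α.ne_zero, fun a h => hnotin ⟨a⁻¹, ?_⟩⟩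
    rw [Algebra.smul_def] at h
    simp only [Matrix.cons_val_one, Matrix.head_cons, Matrix.cons_val_zero] at h
    rw [map_inv₀, inv_eq_of_mul_eq_one_right h]
  refine ⟨hli, ?_⟩
  have hr : Set.range ![(1 : F), (α : F)] = {(1 : F), (α : F)} := by
    simp [Matrix.range_cons, Matrix.range_empty, Set.pair_comm]
  rw [← hr]
  exact hli.span_eq_top_of_card_eq_finrank (by simp [hrank])
end

section
/- Let p be an odd prime, k a natural number, and q = p^(2^k). If α is a generator of a Sylow 2-subgroup of the multiplicative group F_q^*, then the elements 1, α, α², …, α^(2^k − 1) form a basis of F_q as a vector space over its prime subfield F_p. -/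
/-!
The degree of `α` over `𝔽_p` is a divisor `2 ^ j` of `2 ^ k`, and `α ^ (p ^ 2 ^ j) = α`, so the
order of `α` divides `p ^ 2 ^ j - 1`. Since `p ^ 2 ^ (j + 1) - 1 = (p ^ 2 ^ j - 1)(p ^ 2 ^ j + 1)`
with the second factor even, the `2`-adic valuation of `p ^ 2 ^ j - 1` strictly increases with
`j`. The order of `α` is the full `2`-part of `p ^ 2 ^ k - 1`, which forces `j = k`: `α` has
degree `2 ^ k` and its first `2 ^ k` powers form a basis.
-/

open Module Polynomial

namespace Nat

theorem factorization_two_sub_one_lt_sq_sub_one {t : ℕ} (ht : Odd t) (h1 : 1 < t) :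
    (t - 1).factorization 2 < (t ^ 2 - 1).factorization 2 := by
  have hsq : t ^ 2 - 1 = (t - 1) * (t + 1) := by
    rw [mul_comm, ← Nat.sq_sub_sq, one_pow]
  have hpos : 0 < (t + 1).factorization 2 :=
    prime_two.factorization_pos_of_dvd (by omega) ht.add_one.two_dvd
  rw [hsq, factorization_mul (by omega) (by omega), Finsupp.add_apply]
  omega

theorem strictMono_factorization_two_pow_two_pow_sub_one {p : ℕ} (hp : Odd p) (h1 : 1 < p) :
    StrictMono fun j : ℕ => (p ^ 2 ^ j - 1).factorization 2 :=
  strictMono_nat_of_lt_succ fun j => by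
    simpa only [pow_succ, pow_mul] using
      factorization_two_sub_one_lt_sq_sub_one hp.pow (one_lt_pow (by positivity) h1)

theorem not_two_pow_factorization_dvd_pow_two_pow_sub_one {p j k : ℕ} (hp : Odd p) (h1 : 1 < p)
    (hjk : j < k) : ¬ 2 ^ (p ^ 2 ^ k - 1).factorization 2 ∣ p ^ 2 ^ j - 1 := by
  have hne : p ^ 2 ^ j - 1 ≠ 0 := by
    have := one_lt_pow (pow_pos two_pos j).ne' h1
    omega
  rw [prime_two.pow_dvd_iff_le_factorization hne, not_le]
  exact strictMono_factorization_two_pow_two_pow_sub_one hp h1 hjk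

end Nat

section FiniteFieldExtension

variable {K L : Type*} [Field K] [Finite K] [Field L] [Algebra K L] {x : L}

theorem natDegree_minpoly_dvd_iff_pow_card_pow_eq_self (hx : IsIntegral K x) {n : ℕ} :
    (minpoly K x).natDegree ∣ n ↔ x ^ Nat.card K ^ n = x := by
  rw [(minpoly.irreducible hx).natDegree_dvd_iff_dvd_X_pow_card_pow_sub_X, minpoly.dvd_iff,
    map_sub, map_pow, aeval_X, sub_eq_zero]

theorem natDegree_minpoly_eq_two_pow [FiniteDimensional K L] {k : ℕ} (hL : finrank K L = 2 ^ k)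
    (hx : ∀ j < k, x ^ Nat.card K ^ 2 ^ j ≠ x) : (minpoly K x).natDegree = 2 ^ k := by
  have hint : IsIntegral K x := .of_finite K x
  obtain ⟨j, hjk, hdeg⟩ := (Nat.dvd_prime_pow Nat.prime_two).1 (hL ▸ minpoly.degree_dvd hint)
  rcases hjk.lt_or_eq with hlt | rfl
  · exact absurd ((natDegree_minpoly_dvd_iff_pow_card_pow_eq_self hint).1 hdeg.dvd) (hx j hlt)
  · exact hdeg

end FiniteFieldExtension

theorem linearIndependent_pow_and_span_eq_top {K L : Type*} [Field K] [Field L] [Algebra K L]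
    [FiniteDimensional K L] {x : L} {n : ℕ} (hx : (minpoly K x).natDegree = n)
    (hL : finrank K L = n) :
    LinearIndependent K (fun i : Fin n => x ^ (i : ℕ)) ∧
      Submodule.span K (Set.range fun i : Fin n => x ^ (i : ℕ)) = ⊤ := by
  subst hx
  exact ⟨linearIndependent_pow x,
    (linearIndependent_pow x).span_eq_top_of_card_eq_finrank' (by simp [hL])⟩

theorem orderOf_eq_of_zpowers_eq_sylow {G : Type*} [Group G] [Finite G] {p : ℕ} [Fact p.Prime]
    (P : Sylow p G) {g : G} (hg : Subgroup.zpowers g = P) :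
    orderOf g = p ^ (Nat.card G).factorization p := by
  rw [← Nat.card_zpowers, hg, P.card_eq_multiplicity]

/-- Let `p` be an odd prime and `q = p ^ (2 ^ k)`. If `α` is a generator of a
Sylow 2-subgroup of the multiplicative group `Fˣ` of the field `F` with `q` elements, then
`1, α, α², …, α^(2^k - 1)` form a basis of `F` over its prime subfield `𝔽_p = ZMod p`. -/
theorem stmt1 {p k : ℕ} (hp : p.Prime) (hodd : Odd p)
    {F : Type*} [Field F] [Fintype F] [Algebra (ZMod p) F]
    (hF : Fintype.card F = p ^ (2 ^ k))
    (P : Sylow 2 Fˣ) (α : Fˣ) (hα : Subgroup.zpowers α = (P : Subgroup Fˣ)) :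
    LinearIndependent (ZMod p) (fun i : Fin (2 ^ k) => (α : F) ^ (i : ℕ)) ∧
      Submodule.span (ZMod p) (Set.range fun i : Fin (2 ^ k) => (α : F) ^ (i : ℕ)) = ⊤ := by
  have : Fact p.Prime := ⟨hp⟩
  have hrank : finrank (ZMod p) F = 2 ^ k := by
    have h := card_eq_pow_finrank (K := ZMod p) (V := F)
    rw [ZMod.card, hF] at h
    exact Nat.pow_right_injective hp.two_le h.symm
  have hord : orderOf α = 2 ^ (p ^ 2 ^ k - 1).factorization 2 := by
    rw [orderOf_eq_of_zpowers_eq_sylow P hα, Nat.card_units, Nat.card_eq_fintype_card, hF]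
  refine linearIndependent_pow_and_span_eq_top (natDegree_minpoly_eq_two_pow hrank ?_) hrank
  intro j hjk hfix
  have hpos : 0 < p ^ 2 ^ j := pow_pos hp.pos _
  have hunit : α ^ (p ^ 2 ^ j - 1) = 1 := by
    rw [← mul_eq_right (b := α), pow_sub_one_mul hpos.ne']
    exact Units.ext (by rw [Nat.card_zmod] at hfix; push_cast; exact hfix)
  exact Nat.not_two_pow_factorization_dvd_pow_two_pow_sub_one hodd hp.one_lt hjk
    (hord ▸ orderOf_dvd_of_pow_eq_one hunit)
end

section
/- Let P be a finite abelian p-group for a prime p, and let A be a p'-subgroup of Aut(P) (i.e., the order of A is coprime to p). Then P = C_P(A) × [A, P], where C_P(A) is the subgroup of fixed points of A and [A,P] is the commutator subgroup generated by elements a(x)·x^(−1) for a ∈ A, x ∈ P. -/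
/-- The subgroup of fixed points `C_P(A)` of a subgroup `A ≤ Aut(P)` acting on `P`. -/
def fixedSubgroup {P : Type*} [Group P] (A : Subgroup (MulAut P)) : Subgroup P where
  carrier := {x : P | ∀ a ∈ A, a x = x}
  one_mem' := by intro a _; simp
  mul_mem' := by
    intro x y hx hy a ha
    simp [map_mul, hx a ha, hy a ha]
  inv_mem' := by
    intro x hx a ha
    simp [map_inv, hx a ha]

/-- The commutator subgroup `[A, P] = ⟨a(x) x⁻¹ : a ∈ A, x ∈ P⟩`. -/
def autCommutator {P : Type*} [Group P] (A : Subgroup (MulAut P)) : Subgroup P :=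
  Subgroup.closure {y : P | ∃ a ∈ A, ∃ x : P, y = a x * x⁻¹}

section Aux

variable {P : Type*} [CommGroup P] (A : Subgroup (MulAut P)) [Fintype A]

/-- The averaging (transfer-like) map `x ↦ ∏_{a ∈ A} a x`. -/
def Tmap : P →* P where
  toFun x := ∏ a : A, (a : MulAut P) x
  map_one' := by simp
  map_mul' x y := by simp [map_mul, Finset.prod_mul_distrib]

lemma Tmap_apply (x : P) : Tmap A x = ∏ a : A, (a : MulAut P) x := rfl

lemma Tmap_comm (a : A) (x : P) : Tmap A ((a : MulAut P) x) = Tmap A x := by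
  simp only [Tmap_apply]
  have := Equiv.prod_comp (Equiv.mulRight a) (fun b : A => (b : MulAut P) x)
  simpa [MulAut.mul_apply] using this

lemma Tmap_mem_fixed (x : P) : Tmap A x ∈ fixedSubgroup A := by
  intro b hb
  have h : b (Tmap A x) = ∏ a : A, ((⟨b, hb⟩ * a : A) : MulAut P) x := by
    simp [Tmap_apply, map_prod, MulAut.mul_apply]
  rw [h]
  have := Equiv.prod_comp (Equiv.mulLeft (⟨b, hb⟩ : A)) (fun a : A => (a : MulAut P) x)
  simpa [Tmap_apply] using this

lemma Tmap_fixed (x : P) (hx : x ∈ fixedSubgroup A) :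
    Tmap A x = x ^ Fintype.card A := by
  have : ∀ a : A, (a : MulAut P) x = x := fun a => hx a a.2
  simp [Tmap_apply, this, Finset.prod_const, Finset.card_univ]

lemma Tmap_ker (x : P) (hx : x ∈ autCommutator A) : Tmap A x = 1 := by
  have h : autCommutator A ≤ (Tmap A).ker := by
    rw [autCommutator, Subgroup.closure_le]
    rintro y ⟨a, ha, z, rfl⟩
    simp [MonoidHom.mem_ker, map_mul, map_inv, Tmap_comm A ⟨a, ha⟩ z]
  exact h hx

lemma pow_mem_sup (x : P) :
    x ^ Fintype.card A ∈ fixedSubgroup A ⊔ autCommutator A := by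
  have hC : (∏ a : A, ((a : MulAut P) x * x⁻¹)) ∈ autCommutator A := by
    apply Subgroup.prod_mem
    intro a _
    exact Subgroup.subset_closure ⟨a, a.2, x, rfl⟩
  have h : Tmap A x = (∏ a : A, ((a : MulAut P) x * x⁻¹)) * x ^ Fintype.card A := by
    rw [Finset.prod_mul_distrib, Tmap_apply]
    simp [Finset.prod_const, Finset.card_univ, mul_assoc]
  have hx : x ^ Fintype.card A = (∏ a : A, ((a : MulAut P) x * x⁻¹))⁻¹ * Tmap A x := by
    rw [h]; group
  rw [hx]
  exact mul_mem (Subgroup.mem_sup_right (inv_mem hC))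
    (Subgroup.mem_sup_left (Tmap_mem_fixed A x))

end Aux

/-- If `P` is a finite abelian `p`-group and `A` is a `p'`-subgroup of `Aut(P)`,
then `P = C_P(A) × [A, P]` (internal direct product: trivial intersection and join `⊤`). -/
theorem stmt6 {p : ℕ} (hp : p.Prime) {P : Type*} [CommGroup P] [Finite P]
    (hP : IsPGroup p P) (A : Subgroup (MulAut P)) (hA : Nat.Coprime (Nat.card A) p) :
    fixedSubgroup A ⊓ autCommutator A = ⊥ ∧ fixedSubgroup A ⊔ autCommutator A = ⊤ := by
  haveI : Fintype A := Fintype.ofFinite A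
  haveI : Fact p.Prime := ⟨hp⟩
  obtain ⟨k, hk⟩ := hP.exists_card_eq
  have hn : Nat.card A = Fintype.card A := Nat.card_eq_fintype_card
  have hcop : Nat.Coprime (Fintype.card A) (Nat.card P) := by
    rw [hk]
    exact hn ▸ hA.pow_right k
  constructor
  · rw [eq_bot_iff]
    rintro x ⟨hxC, hxK⟩
    have h1 : x ^ Fintype.card A = 1 := (Tmap_fixed A x hxC) ▸ Tmap_ker A x hxK
    have hd1 : orderOf x ∣ Fintype.card A := orderOf_dvd_of_pow_eq_one h1
    have hd2 : orderOf x ∣ Nat.card P := orderOf_dvd_natCard x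
    have : orderOf x = 1 := Nat.eq_one_of_dvd_one (hcop ▸ Nat.dvd_gcd hd1 hd2)
    exact Subgroup.mem_bot.2 (orderOf_eq_one_iff.mp this)
  · rw [eq_top_iff]
    intro x _
    obtain ⟨y, hy⟩ := (powCoprime hcop.symm).surjective x
    have : y ^ Fintype.card A = x := hy
    exact this ▸ pow_mem_sup A y
end

section
/- Let P be a finite abelian p-group for a prime p, and let A be a p'-subgroup of Aut(P). If every element of A acts trivially on Ω₁(P) = {x ∈ P : x^p = 1}, then A is trivial. -/
/-- Let `P` be a finite abelian `p`-group and `A` a `p'`-subgroup of `Aut(P)`.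
If every element of `A` acts trivially on `Ω₁(P) = {x ∈ P : x ^ p = 1}`, then `A` is trivial. -/
theorem stmt7 {p : ℕ} (hp : p.Prime) {P : Type*} [CommGroup P] [Finite P]
    (hP : IsPGroup p P) (A : Subgroup (MulAut P)) (hA : Nat.Coprime (Nat.card A) p)
    (htriv : ∀ a ∈ A, ∀ x : P, x ^ p = 1 → a x = x) :
    A = ⊥ := by
  rw [eq_bot_iff]
  intro a ha
  rw [Subgroup.mem_bot]
  have hcard : a ^ Nat.card A = 1 := by
    have h1 : (⟨a, ha⟩ : A) ^ Nat.card A = 1 := pow_card_eq_one'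
    exact_mod_cast congrArg (A.subtype) h1
  suffices h : ∀ k (x : P), x ^ p ^ k = 1 → a x = x by
    ext x
    obtain ⟨k, hk⟩ := hP x
    simpa using h k x hk
  intro k
  induction k with
  | zero =>
    intro x hx
    simp only [pow_zero, pow_one] at hx
    simp [hx]
  | succ k ih =>
    intro x hx
    have hxp : (x ^ p) ^ p ^ k = 1 := by
      rw [← pow_mul, ← pow_succ']; exact hx
    have hap : (a x) ^ p = x ^ p := by
      rw [← map_pow]; exact ih (x ^ p) hxp
    set z := a x * x⁻¹ with hzdef
    have hz : z ^ p = 1 := by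
      rw [hzdef, mul_pow, hap, inv_pow, mul_inv_cancel]
    have haz : a z = z := htriv a ha z hz
    have hax : x * z = a x := by
      rw [mul_comm]; exact inv_mul_cancel_right _ _
    have hpow : ∀ m, (a ^ m) x = x * z ^ m := by
      intro m
      induction m with
      | zero => simp
      | succ m ihm =>
        calc (a ^ (m + 1)) x = a ((a ^ m) x) := by rw [pow_succ']; rfl
        _ = a (x * z ^ m) := by rw [ihm]
        _ = a x * (a z) ^ m := by rw [map_mul, map_pow]
        _ = (x * z) * z ^ m := by rw [haz, hax]
        _ = x * z ^ (m + 1) := by rw [mul_assoc, ← pow_succ']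
    have hn := hpow (Nat.card A)
    rw [hcard] at hn
    have hzn : z ^ Nat.card A = 1 := by
      have hx1 : x = x * z ^ Nat.card A := by simpa using hn
      exact (left_eq_mul.mp hx1)
    have hz1 : z = 1 := by
      have h1 : orderOf z ∣ p := orderOf_dvd_of_pow_eq_one hz
      have h2 : orderOf z ∣ Nat.card A := orderOf_dvd_of_pow_eq_one hzn
      have h3 : orderOf z ∣ Nat.gcd (Nat.card A) p := Nat.dvd_gcd h2 h1
      rw [hA] at h3
      exact orderOf_eq_one_iff.mp (Nat.dvd_one.mp h3)
    rw [← hax, hz1, mul_one]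
end

section
/- Let G be a finite group, H ≤ G a subgroup containing some Sylow p-subgroup S of G. Then H is pronormal in G if and only if for every g ∈ N_G(S), the subgroups H and H^g are conjugate in ⟨H, H^g⟩. -/
/-!
Frattini argument: if `S ≤ H`, then `S` and `S^g` are Sylow subgroups of `K = ⟨H, H^g⟩`, so
`S^(cg) = S` for some `c ∈ K`. Since `H^(cg) = (H^g)^c ≤ K`, a conjugating element `x ∈ ⟨H, H^(cg)⟩`
with `H^x = H^(cg)` lies in `K`, and `c⁻¹x ∈ K` conjugates `H` onto `H^g`.
-/

/-- The conjugate subgroup `H^g = g H g⁻¹` (conjugation by `g`). -/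
def conjSub {G : Type*} [Group G] (g : G) (H : Subgroup G) : Subgroup G :=
  H.map (MulAut.conj g).toMonoidHom

/-- A subgroup `H` of `G` is pronormal in `G` if for every `g ∈ G` the subgroups `H` and
`H^g` are conjugate by an element of `⟨H, H^g⟩`. -/
def IsPronormal {G : Type*} [Group G] (H : Subgroup G) : Prop :=
  ∀ g : G, ∃ x ∈ H ⊔ conjSub g H, conjSub x H = conjSub g H

open Pointwise

section

variable {G : Type*} [Group G]

lemma conjSub_eq_smul (g : G) (H : Subgroup G) : conjSub g H = MulAut.conj g • H := by
  rw [Subgroup.pointwise_smul_def]; rfl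

lemma conjSub_mul (a b : G) (H : Subgroup G) :
    conjSub (a * b) H = conjSub a (conjSub b H) := by
  simp [conjSub_eq_smul, map_mul, mul_smul]

lemma conjSub_le_of_mem {H K : Subgroup G} {c : G} (hc : c ∈ K) (hH : H ≤ K) :
    conjSub c H ≤ K := by
  rw [conjSub_eq_smul]
  exact Subgroup.conj_smul_le_of_le hH ⟨c, hc⟩

lemma Sylow.exists_mem_mul_mem_normalizer {p : ℕ} [Fact p.Prime] {K : Subgroup G}
    [Finite (Sylow p K)] (P : Sylow p G) {g : G} (hP : (P : Subgroup G) ≤ K)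
    (hgP : ((g • P : Sylow p G) : Subgroup G) ≤ K) :
    ∃ c ∈ K, c * g ∈ Subgroup.normalizer ((P : Subgroup G) : Set G) := by
  obtain ⟨c, hc⟩ := MulAction.exists_smul_eq K ((g • P).subtype hgP) (P.subtype hP)
  rw [Sylow.smul_subtype] at hc
  refine ⟨c, c.2, Sylow.smul_eq_iff_mem_normalizer.mp ?_⟩
  rw [mul_smul]
  exact Sylow.subtype_injective hc

def ConjugateInJoin (H : Subgroup G) (g : G) : Prop :=
  ∃ x ∈ H ⊔ conjSub g H, conjSub x H = conjSub g H

lemma ConjugateInJoin.of_mul_left {H : Subgroup G} {c g : G} (hc : c ∈ H ⊔ conjSub g H)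
    (h : ConjugateInJoin H (c * g)) : ConjugateInJoin H g := by
  obtain ⟨x, hx, hxH⟩ := h
  have hcgH : conjSub (c * g) H ≤ H ⊔ conjSub g H := by
    rw [conjSub_mul]
    exact conjSub_le_of_mem hc le_sup_right
  refine ⟨c⁻¹ * x, mul_mem (inv_mem hc) (sup_le le_sup_left hcgH hx), ?_⟩
  rw [conjSub_mul, hxH, ← conjSub_mul, inv_mul_cancel_left]

end

/-- If `H` contains a Sylow `p`-subgroup `S` of the finite group `G`, then `H`
is pronormal in `G` iff for every `g ∈ N_G(S)`, `H` and `H^g` are conjugate in `⟨H, H^g⟩`. -/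
theorem stmt8 {G : Type*} [Group G] [Finite G] {p : ℕ} [Fact p.Prime]
    (H : Subgroup G) (S : Sylow p G) (hS : (S : Subgroup G) ≤ H) :
    IsPronormal H ↔
      ∀ g ∈ Subgroup.normalizer ((S : Subgroup G) : Set G),
        ∃ x ∈ H ⊔ conjSub g H, conjSub x H = conjSub g H := by
  refine ⟨fun hH g _ => hH g, fun hN g => ?_⟩
  have hgS : ((g • S : Sylow p G) : Subgroup G) ≤ H ⊔ conjSub g H := by
    rw [Sylow.coe_subgroup_smul, ← conjSub_eq_smul]
    exact (Subgroup.map_mono hS).trans le_sup_right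
  obtain ⟨c, hc, hcg⟩ := S.exists_mem_mul_mem_normalizer (hS.trans le_sup_left) hgS
  exact ConjugateInJoin.of_mul_left hc (hN _ hcg)
end

section
/- Let p be a prime and let 𝒳_p be the class of finite groups with self-normalizing Sylow p-subgroups. If X is a normal subgroup of Y with X ∈ 𝒳_p and Y/X ∈ 𝒳_p, then Y ∈ 𝒳_p. -/
/-!
Let `P` be a Sylow `p`-subgroup of `Y`. Its image in `Y ⧸ X` is Sylow and normalized by the image
of `N_Y(P)`, so `N_Y(P) ≤ P ⊔ X = P X`. Writing `y = a x` with `a ∈ P`, the factor `x ∈ X` normalizes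
`P` and hence the Sylow subgroup `P ⊓ X` of `X`, so `x ∈ P ⊓ X`.
-/

/-- A group `G` belongs to the class `𝒳_p` if every Sylow `p`-subgroup is self-normalizing. -/
def SylowSelfNormalizing (p : ℕ) (G : Type*) [Group G] : Prop :=
  ∀ P : Sylow p G, Subgroup.normalizer ((P : Subgroup G) : Set G) = P

namespace Subgroup

variable {G : Type*} [Group G]

theorem relIndex_sup_of_normal (H K : Subgroup G) [K.Normal] (hK : K.relIndex H ≠ 0) :
    H.relIndex (H ⊔ K) = H.relIndex K := by
  have via_H : (H ⊓ K).relIndex (H ⊔ K) = H.relIndex (H ⊔ K) * K.relIndex H := by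
    rw [← inf_relIndex_left H K, mul_comm, relIndex_mul_relIndex _ _ _ inf_le_left le_sup_left]
  have via_K : (H ⊓ K).relIndex (H ⊔ K) = H.relIndex K * K.relIndex H := by
    rw [← relIndex_mul_relIndex _ K _ inf_le_right le_sup_right, inf_relIndex_right,
      relIndex_sup_right]
  exact mul_right_cancel₀ hK (via_H.symm.trans via_K)

theorem normalizer_inf_le_of_subgroupOf {H N : Subgroup G}
    (h : normalizer ((H.subgroupOf N : Subgroup N) : Set N) = H.subgroupOf N) :
    normalizer (H : Set G) ⊓ N ≤ H := fun x ⟨hxH, hxN⟩ =>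
  have hx : (⟨x, hxN⟩ : N) ∈ normalizer ((H.subgroupOf N : Subgroup N) : Set N) :=
    le_normalizer_comap N.subtype hxH
  mem_subgroupOf.mp (h ▸ hx)

theorem normalizer_le_sup_ker_of_map {G' : Type*} [Group G'] {H : Subgroup G} {f : G →* G'}
    (h : normalizer ((H.map f : Subgroup G') : Set G') = H.map f) :
    normalizer (H : Set G) ≤ H ⊔ f.ker := by
  rw [← comap_map_eq, ← h]
  exact map_le_iff_le_comap.mp (le_normalizer_map f)

end Subgroup

namespace Sylow

variable {p : ℕ} [Fact p.Prime] {G : Type*} [Group G] [Finite G]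

theorem not_dvd_relIndex_of_normal (P : Sylow p G) (N : Subgroup G) [N.Normal] :
    ¬ p ∣ (P : Subgroup G).relIndex N := by
  have : N.IsFiniteRelIndex P := Subgroup.isFiniteRelIndex_of_finiteIndex
  rw [← Subgroup.relIndex_sup_of_normal _ _ Subgroup.relIndex_ne_zero]
  exact fun h => P.not_dvd_index (h.trans (Subgroup.relIndex_dvd_index_of_le le_sup_left))

noncomputable def subgroupOfNormal (P : Sylow p G) (N : Subgroup G) [N.Normal] : Sylow p N :=
  P.2.comap_subtype.toSylow (P.not_dvd_relIndex_of_normal N)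

end Sylow

namespace SylowSelfNormalizing

variable {p : ℕ} [Fact p.Prime] {G : Type*} [Group G] [Finite G]

theorem normalizer_inf_le {N : Subgroup G} [N.Normal] (hN : SylowSelfNormalizing p N)
    (P : Sylow p G) : Subgroup.normalizer ((P : Subgroup G) : Set G) ⊓ N ≤ P :=
  Subgroup.normalizer_inf_le_of_subgroupOf (hN (P.subgroupOfNormal N))

theorem normalizer_le_sup_ker {G' : Type*} [Group G'] {f : G →* G'}
    (hf : Function.Surjective f) (hG' : SylowSelfNormalizing p G') (P : Sylow p G) :
    Subgroup.normalizer ((P : Subgroup G) : Set G) ≤ (P : Subgroup G) ⊔ f.ker :=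
  Subgroup.normalizer_le_sup_ker_of_map (hG' (P.mapSurjective hf))

end SylowSelfNormalizing

/-- If `X ⊴ Y` with `X ∈ 𝒳_p` and `Y/X ∈ 𝒳_p`, then `Y ∈ 𝒳_p`. -/
theorem stmt11 {p : ℕ} [Fact p.Prime] {Y : Type*} [Group Y] [Finite Y]
    (X : Subgroup Y) [X.Normal]
    (hX : SylowSelfNormalizing p X) (hQ : SylowSelfNormalizing p (Y ⧸ X)) :
    SylowSelfNormalizing p Y := by
  intro P
  refine le_antisymm (fun y hy => ?_) Subgroup.le_normalizer
  have hyPX : y ∈ (P : Subgroup Y) ⊔ X := by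
    simpa using hQ.normalizer_le_sup_ker (QuotientGroup.mk'_surjective X) P hy
  rw [← SetLike.mem_coe, Subgroup.mul_normal] at hyPX
  obtain ⟨a, ha, x, hx, rfl⟩ := hyPX
  have hxN : x ∈ Subgroup.normalizer ((P : Subgroup Y) : Set Y) := by
    simpa using mul_mem (inv_mem (Subgroup.le_normalizer ha)) hy
  exact mul_mem ha (hX.normalizer_inf_le P ⟨hxN, hx⟩)
end

section
/- Let G be a finite group, H ≤ G, and V an abelian normal subgroup of G with G = HV. Then H is pronormal in G if and only if for every H-invariant subgroup U ≤ V one has U = N_U(H)·[H,U]. -/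
/-!
Two elements `a, b` conjugate `H` onto the same subgroup iff `a⁻¹ b ∈ N(H)`. If `U ≤ V` is
`H`-invariant and `u ∈ U`, then `⟨H, H^u⟩ ≤ H [H, U] = H ⊔ [H, U]`, because `u h u⁻¹ = [u, h] h` and
`H` normalizes `[H, U]`. So pronormality provides `h w` with `h ∈ H`, `w ∈ [H, U]` and
`H^{hw} = H^u`; in the abelian group `U` this splits `u` as an element of `N_U(H)` times one of
`[H, U]`.

Conversely, since `G = VH` it suffices to treat `H^v` for `v ∈ V`. Take for `U` the subgroup
generated by the `H`-conjugates of `v`, and write `v = n w` with `n ∈ N_U(H)`, `w ∈ [H, U]`; then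
`H^w = H^v`, and `w ∈ ⟨H, H^v⟩` because `u ↦ [h, u]` is a homomorphism on the abelian normal
subgroup `V`, and `[h, v] = h · (v h⁻¹ v⁻¹) ∈ ⟨H, H^v⟩`.
-/

open Pointwise

open Subgroup ConjAct
open scoped commutatorElement

section

variable {G : Type*} [Group G]

lemma conjSub_eq_toConjAct_smul (g : G) (H : Subgroup G) : conjSub g H = toConjAct g • H := rfl

lemma conjSub_eq_conjSub_iff {a b : G} {H : Subgroup G} :
    conjSub a H = conjSub b H ↔ a⁻¹ * b ∈ normalizer H := by
  rw [conjSub_eq_toConjAct_smul, conjSub_eq_toConjAct_smul, ← conjAct_pointwise_smul_iff, map_mul,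
    map_inv, mul_smul, inv_smul_eq_iff, eq_comm]

lemma isPronormal_of_forall_mem {H V : Subgroup G} [V.Normal] (hG : H ⊔ V = ⊤)
    (hV : ∀ v ∈ V, ∃ x ∈ H ⊔ conjSub v H, conjSub x H = conjSub v H) : IsPronormal H := by
  intro g
  have hg : g ∈ (V : Set G) * H := by
    rw [← normal_mul, sup_comm, hG]
    trivial
  obtain ⟨v, hv, h, hh, rfl⟩ := Set.mem_mul.1 hg
  have hconj : conjSub (v * h) H = conjSub v H :=
    conjSub_eq_conjSub_iff.2 (by simpa using le_normalizer (inv_mem hh))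
  simpa only [hconj] using hV v hv

lemma commutatorElement_mem_sup_conjSub {H : Subgroup G} {h : G} (hh : h ∈ H) (g : G) :
    ⁅h, g⁆ ∈ H ⊔ conjSub g H := by
  rw [commutatorElement_def, mul_assoc, mul_assoc, ← mul_assoc g]
  exact mul_mem (mem_sup_left hh) (mem_sup_right ⟨h⁻¹, inv_mem hh, rfl⟩)

lemma sup_conjSub_le_sup_commutator {H U : Subgroup G} {u : G} (hu : u ∈ U) :
    H ⊔ conjSub u H ≤ H ⊔ ⁅H, U⁆ := by
  refine sup_le le_sup_left ?_
  rintro _ ⟨h, hh, rfl⟩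
  have hcomm : ⁅u, h⁆ ∈ ⁅H, U⁆ := commutator_comm U H ▸ commutator_mem_commutator hu hh
  rw [show (MulAut.conj u).toMonoidHom h = ⁅u, h⁆ * h by simp [commutatorElement_def]]
  exact mul_mem (mem_sup_right hcomm) (mem_sup_left hh)

lemma inf_normalizer_mul_commutator_subset {H U : Subgroup G} (hHU : H ≤ normalizer U) :
    (↑(U ⊓ normalizer H) : Set G) * ↑⁅H, U⁆ ⊆ U := by
  rintro _ ⟨n, hn, w, hw, rfl⟩
  exact mul_mem hn.1 (le_normalizer_iff_commutator_le_right.1 hHU hw)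

lemma mem_inf_normalizer_mul_commutator_of_conjSub_eq {H U : Subgroup G}
    (hU : ∀ x ∈ U, ∀ y ∈ U, x * y = y * x) (hHU : H ≤ normalizer U) {u x : G} (hu : u ∈ U)
    (hx : x ∈ H ⊔ conjSub u H) (hxu : conjSub x H = conjSub u H) :
    u ∈ (↑(U ⊓ normalizer H) : Set G) * ↑⁅H, U⁆ := by
  have hx' : x ∈ (H : Set G) * ↑⁅H, U⁆ := by
    rw [← coe_mul_of_left_le_normalizer_right _ _ (normalizer_commutator_ge_left H U)]
    exact sup_conjSub_le_sup_commutator hu hx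
  obtain ⟨h, hh, w, hw, rfl⟩ := Set.mem_mul.1 hx'
  have hwU : w ∈ U := le_normalizer_iff_commutator_le_right.1 hHU hw
  set v := h⁻¹ * u * h
  have hvU : v ∈ U := by simpa using le_normalizer_iff.1 hHU h⁻¹ (inv_mem hh) u hu
  have hn : w⁻¹ * v ∈ normalizer H := by
    have h1 := conjSub_eq_conjSub_iff.1 hxu
    rwa [show (h * w)⁻¹ * u = w⁻¹ * v * h⁻¹ by simp only [v]; group,
      mul_mem_cancel_right (inv_mem (le_normalizer hh))] at h1
  refine ⟨w⁻¹ * v, mem_inf.2 ⟨mul_mem (inv_mem hwU) hvU, hn⟩, w * ⁅h, v⁆,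
    mul_mem hw (commutator_mem_commutator hh hvU), ?_⟩
  calc w⁻¹ * v * (w * ⁅h, v⁆) = w⁻¹ * (v * w) * u * v⁻¹ := by
        simp only [v, commutatorElement_def]; group
    _ = v * u * v⁻¹ := by rw [hU v hvU w hwU]; group
    _ = u := by rw [hU v hvU u hu]; group

lemma commutatorElement_mem_of_mem_closure {V L : Subgroup G} [V.Normal]
    (hV : ∀ x ∈ V, ∀ y ∈ V, x * y = y * x) {S : Set G} (hS : S ⊆ V) (g : G)
    (hgS : ∀ s ∈ S, ⁅g, s⁆ ∈ L) {u : G} (hu : u ∈ closure S) : ⁅g, u⁆ ∈ L := by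
  have hSV : closure S ≤ V := (closure_le V).2 hS
  have hgV : ∀ a ∈ V, ⁅g, a⁆ ∈ V := fun a ha =>
    commutator_le_right ⊤ V (commutator_mem_commutator (mem_top g) ha)
  induction hu using closure_induction with
  | mem s hs => exact hgS s hs
  | one => simp
  | mul a b ha hb iha ihb =>
    rw [commutatorElement_mul_right_eq_mul_conj, mul_assoc _ a,
      hV a (hSV ha) _ (hgV b (hSV hb)), ← mul_assoc, mul_inv_cancel_right]
    exact mul_mem iha ihb
  | inv a ha iha =>
    have haV : ⁅a, g⁆ ∈ V := by simpa using inv_mem (hgV a (hSV ha))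
    rw [commutatorElement_inv_right, mul_assoc, ← hV a (hSV ha) _ haV, inv_mul_cancel_left,
      ← commutatorElement_inv]
    exact inv_mem iha

section ConjClosure

variable (H : Subgroup G) (v : G)

def conjClosure : Subgroup G :=
  closure ((fun h => h * v * h⁻¹) '' H)

lemma mem_conjClosure_self : v ∈ conjClosure H v :=
  subset_closure ⟨1, one_mem H, by group⟩

lemma le_normalizer_conjClosure : H ≤ normalizer (conjClosure H v) := by
  refine le_normalizer_closure_iff.2 ?_
  rintro h hh _ ⟨k, hk, rfl⟩
  exact subset_closure ⟨h * k, mul_mem hh hk, by group⟩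

variable {H v}

lemma conjClosure_le {V : Subgroup G} [hV : V.Normal] (hv : v ∈ V) : conjClosure H v ≤ V :=
  (closure_le V).2 <| by
    rintro _ ⟨k, -, rfl⟩
    exact hV.conj_mem v hv k

lemma commutator_conjClosure_le_sup {V : Subgroup G} [V.Normal]
    (hV : ∀ x ∈ V, ∀ y ∈ V, x * y = y * x) (hv : v ∈ V) :
    ⁅H, conjClosure H v⁆ ≤ H ⊔ conjSub v H := by
  rw [commutator_le]
  intro h hh u hu
  refine commutatorElement_mem_of_mem_closure hV ((closure_le V).1 (conjClosure_le hv)) h ?_ hu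
  rintro _ ⟨k, hk, rfl⟩
  have hk' : k ∈ H ⊔ conjSub v H := mem_sup_left hk
  rw [show ⁅h, k * v * k⁻¹⁆ = k * ⁅k⁻¹ * h * k, v⁆ * k⁻¹ by rw [conjugate_commutatorElement]; group]
  exact mul_mem (mul_mem hk'
    (commutatorElement_mem_sup_conjSub (mul_mem (mul_mem (inv_mem hk) hh) hk) v)) (inv_mem hk')

end ConjClosure

lemma exists_conjSub_eq_of_mem_inf_normalizer_mul_commutator {H U : Subgroup G} {v : G}
    (hU : ∀ x ∈ U, ∀ y ∈ U, x * y = y * x) (hHU : H ≤ normalizer U)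
    (hle : ⁅H, U⁆ ≤ H ⊔ conjSub v H) (hv : v ∈ (↑(U ⊓ normalizer H) : Set G) * ↑⁅H, U⁆) :
    ∃ x ∈ H ⊔ conjSub v H, conjSub x H = conjSub v H := by
  obtain ⟨n, hn, w, hw, hnw⟩ := Set.mem_mul.1 hv
  have hwU : w ∈ U := le_normalizer_iff_commutator_le_right.1 hHU hw
  refine ⟨w, hle hw, conjSub_eq_conjSub_iff.2 ?_⟩
  rw [← hnw, hU n hn.1 w hwU, inv_mul_cancel_left]
  exact hn.2

end

theorem stmt14_general {G : Type*} [Group G] (H V : Subgroup G) [V.Normal]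
    (hab : ∀ x ∈ V, ∀ y ∈ V, x * y = y * x) (hG : H ⊔ V = ⊤) :
    IsPronormal H ↔
      ∀ U : Subgroup G, U ≤ V → (∀ h ∈ H, ∀ u ∈ U, h * u * h⁻¹ ∈ U) →
        (U : Set G) = (↑(U ⊓ Subgroup.normalizer (H : Set G)) : Set G) * (↑⁅H, U⁆ : Set G) := by
  have habU : ∀ U ≤ V, ∀ x ∈ U, ∀ y ∈ U, x * y = y * x :=
    fun U hUV x hx y hy => hab x (hUV hx) y (hUV hy)
  constructor
  · intro hpro U hUV hinv
    have hHU := le_normalizer_iff.2 hinv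
    refine Set.Subset.antisymm (fun u hu => ?_) (inf_normalizer_mul_commutator_subset hHU)
    obtain ⟨x, hx, hxu⟩ := hpro u
    exact mem_inf_normalizer_mul_commutator_of_conjSub_eq (habU U hUV) hHU hu hx hxu
  · intro hcond
    refine isPronormal_of_forall_mem hG fun v hv => ?_
    have hUV : conjClosure H v ≤ V := conjClosure_le hv
    refine exists_conjSub_eq_of_mem_inf_normalizer_mul_commutator (habU _ hUV)
      (le_normalizer_conjClosure H v) (commutator_conjClosure_le_sup hab hv) ?_
    rw [← hcond _ hUV (le_normalizer_iff.1 (le_normalizer_conjClosure H v))]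
    exact mem_conjClosure_self H v

/-- Let `V` be an abelian normal subgroup of a finite group `G` with
`G = HV`. Then `H` is pronormal in `G` iff for every `H`-invariant subgroup `U ≤ V`
one has `U = N_U(H) · [H, U]` (as subsets of `G`). -/
theorem stmt14 {G : Type*} [Group G] [Finite G] (H V : Subgroup G) [V.Normal]
    (hab : ∀ x ∈ V, ∀ y ∈ V, x * y = y * x) (hG : H ⊔ V = ⊤) :
    IsPronormal H ↔
      ∀ U : Subgroup G, U ≤ V → (∀ h ∈ H, ∀ u ∈ U, h * u * h⁻¹ ∈ U) →
        (U : Set G) = (↑(U ⊓ Subgroup.normalizer (H : Set G)) : Set G) * (↑⁅H, U⁆ : Set G) :=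
  stmt14_general H V hab hG
end

section
/- Let P ≅ Z_{3^n} × Z_{3^(n−1)} with n > 1, and let t be an automorphism of P of order 2 such that C_P(t) is cyclic of order 3^(n−1). Then [P,t] ≅ Z_{3^n}, and the subgroup ℧^(n−1)(P) = ⟨x^(3^(n−1)) : x ∈ P⟩ has order 3 and is contained in [P,t] ∩ Ω₁(P). -/
/-!
As `2` is invertible modulo `3 ^ n`, every `x ∈ P` splits as `x = a + b` with `t a = a` and
`t b = -b`, and every element inverted by `t` lies in `[P, t] = (t - 1) P`; moreover
`|[P, t]| = |P| / |C_P(t)| = 3 ^ n`. Splitting `(1, 0)` this way, the fixed part `a` is killed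
by `3 ^ (n - 1)` because `|C_P(t)| = 3 ^ (n - 1)`, so `3 ^ (n - 1) • b = 3 ^ (n - 1) • (1, 0)`,
which is nonzero. Hence `b ∈ [P, t]` has order `3 ^ n`, so `[P, t]` is cyclic, and it contains
`℧^(n-1)(P) = ⟨3 ^ (n - 1) • (1, 0)⟩`, a group of order `3` inside `Ω₁(P)`.
-/

/-- The fixed-point subgroup `C_P(t)` of an automorphism `t` of an abelian group `P`. -/
def fixedByA {P : Type*} [AddCommGroup P] (t : AddAut P) : AddSubgroup P where
  carrier := {x : P | t x = x}
  zero_mem' := by simp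
  add_mem' := by intro x y hx hy; simp only [Set.mem_setOf_eq, map_add] at *; rw [hx, hy]
  neg_mem' := by intro x hx; simp only [Set.mem_setOf_eq, map_neg] at *; rw [hx]

/-- The commutator subgroup `[P, t] = ⟨t x - x : x ∈ P⟩`. -/
def commByA {P : Type*} [AddCommGroup P] (t : AddAut P) : AddSubgroup P :=
  AddSubgroup.closure {y : P | ∃ x : P, y = t x - x}

/-- The agemo subgroup `℧^m(P) = ⟨p^m · x : x ∈ P⟩` (here `p = 3`). -/
def mho3 (P : Type*) [AddCommGroup P] (m : ℕ) : AddSubgroup P :=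
  AddSubgroup.closure {y : P | ∃ x : P, y = (3 ^ m) • x}

/-- The omega subgroup `Ω₁(P) = {x ∈ P : 3 • x = 0}` of an abelian `3`-group `P`. -/
def omega3 (P : Type*) [AddCommGroup P] : AddSubgroup P where
  carrier := {x : P | 3 • x = 0}
  zero_mem' := by simp
  add_mem' := by
    intro x y hx hy
    simp only [Set.mem_setOf_eq] at *
    rw [smul_add, hx, hy, add_zero]
  neg_mem' := by
    intro x hx
    simp only [Set.mem_setOf_eq] at *
    rw [smul_neg, hx, neg_zero]

namespace AddAut

variable {P : Type*} [AddCommGroup P] (t : AddAut P)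

def subId : P →+ P where
  toFun x := t x - x
  map_zero' := by simp
  map_add' x y := by simp only [map_add]; abel

theorem subId_apply (x : P) : t.subId x = t x - x := rfl

theorem ker_subId : t.subId.ker = fixedByA t := by
  ext x
  exact sub_eq_zero

theorem range_subId : t.subId.range = commByA t := by
  refine le_antisymm ?_ ((AddSubgroup.closure_le _).mpr ?_)
  · rintro _ ⟨x, rfl⟩
    exact AddSubgroup.subset_closure ⟨x, rfl⟩
  · rintro _ ⟨x, rfl⟩
    exact ⟨x, rfl⟩

theorem card_commByA_mul_card_fixedByA :
    Nat.card (commByA t) * Nat.card (fixedByA t) = Nat.card P := by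
  rw [← range_subId, ← ker_subId, ← AddSubgroup.index_ker, AddSubgroup.index_mul_card]

/-- `k` plays the role of `1/2`. -/
theorem mem_commByA_of_apply_eq_neg {k : ℕ} (hk : ∀ x : P, (2 * k) • x = x) {y : P}
    (hy : t y = -y) : y ∈ commByA t := by
  rw [← range_subId]
  refine ⟨-(k • y), ?_⟩
  rw [subId_apply, map_neg, map_nsmul, hy, smul_neg, neg_neg, sub_neg_eq_add, ← two_nsmul,
    ← mul_nsmul', hk]

theorem exists_fixed_add_negated {k : ℕ} (ht : Function.Involutive t)
    (hk : ∀ x : P, (2 * k) • x = x) (x : P) :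
    ∃ a b : P, t a = a ∧ t b = -b ∧ a + b = x := by
  refine ⟨k • (x + t x), k • (x - t x), ?_, ?_, ?_⟩
  · rw [map_nsmul, map_add, ht, add_comm]
  · rw [map_nsmul, map_sub, ht, ← smul_neg, neg_sub]
  · rw [← smul_add, add_add_sub_cancel, ← two_nsmul, ← mul_nsmul, hk]

end AddAut

theorem exists_two_mul_nsmul_eq_self {G : Type*} [AddMonoid G] {m : ℕ} (hm : Odd m)
    (h : ∀ x : G, m • x = 0) : ∃ k : ℕ, ∀ x : G, (2 * k) • x = x := by
  obtain ⟨j, rfl⟩ := hm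
  refine ⟨j + 1, fun x => ?_⟩
  rw [show 2 * (j + 1) = 2 * j + 1 + 1 by ring, add_nsmul, h, one_nsmul, zero_add]

theorem ZMod.prod_nsmul_eq_zero {a b : ℕ} (hba : b ∣ a) (x : ZMod a × ZMod b) : a • x = 0 :=
  Prod.ext (by simp [nsmul_eq_mul]) (by simp [nsmul_eq_mul, (ZMod.natCast_eq_zero_iff a b).2 hba])

section ThreeGroup

variable {n : ℕ}

theorem three_pow_nsmul_eq_zero (x : ZMod (3 ^ n) × ZMod (3 ^ (n - 1))) : 3 ^ n • x = 0 :=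
  ZMod.prod_nsmul_eq_zero (pow_dvd_pow 3 (n.sub_le 1)) x

theorem three_pow_pred_nsmul_ne_zero (hn : 0 < n) :
    3 ^ (n - 1) • ((1 : ZMod (3 ^ n)), (0 : ZMod (3 ^ (n - 1)))) ≠ 0 := by
  intro h
  have h1 : ((3 ^ (n - 1) : ℕ) : ZMod (3 ^ n)) = 0 := by simpa using congrArg Prod.fst h
  rw [ZMod.natCast_eq_zero_iff, Nat.pow_dvd_pow_iff_le_right (by norm_num)] at h1
  omega

theorem three_nsmul_three_pow_pred_nsmul (hn : 0 < n) (x : ZMod (3 ^ n) × ZMod (3 ^ (n - 1))) :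
    3 • 3 ^ (n - 1) • x = 0 := by
  rw [← mul_nsmul', ← pow_succ', Nat.sub_add_cancel hn, three_pow_nsmul_eq_zero]

theorem mho3_eq_zmultiples :
    mho3 (ZMod (3 ^ n) × ZMod (3 ^ (n - 1))) (n - 1) =
      AddSubgroup.zmultiples (3 ^ (n - 1) • ((1 : ZMod (3 ^ n)), (0 : ZMod (3 ^ (n - 1))))) := by
  refine le_antisymm ((AddSubgroup.closure_le _).mpr ?_) ?_
  · rintro _ ⟨x, rfl⟩
    refine ⟨x.1.val, Prod.ext ?_ ?_⟩
    · simp [nsmul_eq_mul, mul_comm]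
    · simp only [Prod.smul_snd, smul_zero, ZModModule.char_nsmul_eq_zero]
  · exact AddSubgroup.zmultiples_le.mpr (AddSubgroup.subset_closure ⟨_, rfl⟩)

theorem card_mho3 (hn : 0 < n) :
    Nat.card (mho3 (ZMod (3 ^ n) × ZMod (3 ^ (n - 1))) (n - 1)) = 3 := by
  rw [mho3_eq_zmultiples, Nat.card_zmultiples,
    addOrderOf_eq_prime (three_nsmul_three_pow_pred_nsmul hn _) (three_pow_pred_nsmul_ne_zero hn)]

end ThreeGroup

theorem stmt17_general (n : ℕ) (hn : 1 < n)
    (t : AddAut (ZMod (3 ^ n) × ZMod (3 ^ (n - 1)))) (ht2 : t + t = 0)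
    (hfixcard : Nat.card (fixedByA t) = 3 ^ (n - 1)) :
    IsAddCyclic (commByA t) ∧ Nat.card (commByA t) = 3 ^ n ∧
      Nat.card (mho3 (ZMod (3 ^ n) × ZMod (3 ^ (n - 1))) (n - 1)) = 3 ∧
      mho3 (ZMod (3 ^ n) × ZMod (3 ^ (n - 1))) (n - 1) ≤
        commByA t ⊓ omega3 (ZMod (3 ^ n) × ZMod (3 ^ (n - 1))) := by
  have hn0 : 0 < n := by omega
  have ht : Function.Involutive t := fun x => by simpa using congr($ht2 x)
  obtain ⟨k, hk⟩ := exists_two_mul_nsmul_eq_self (Odd.pow (by decide)) three_pow_nsmul_eq_zero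
  have hcard : Nat.card (commByA t) = 3 ^ n := by
    have h := t.card_commByA_mul_card_fixedByA
    rw [hfixcard, Nat.card_prod, Nat.card_zmod, Nat.card_zmod] at h
    exact Nat.eq_of_mul_eq_mul_right (by positivity) h
  obtain ⟨a, b, ha, hb, hab⟩ := t.exists_fixed_add_negated ht hk (1, 0)
  have ha0 : 3 ^ (n - 1) • a = 0 :=
    congrArg Subtype.val (hfixcard ▸ card_nsmul_eq_zero' (x := (⟨a, ha⟩ : fixedByA t)))
  have hbz : 3 ^ (n - 1) • b = 3 ^ (n - 1) • (1, 0) := by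
    rw [← hab, smul_add, ha0, zero_add]
  have hbmem : b ∈ commByA t := t.mem_commByA_of_apply_eq_neg hk hb
  have hordb : addOrderOf b = 3 ^ n := by
    have h := addOrderOf_eq_prime_pow (hbz ▸ three_pow_pred_nsmul_ne_zero hn0)
      (by rw [Nat.sub_add_cancel hn0]; exact three_pow_nsmul_eq_zero b)
    rwa [Nat.sub_add_cancel hn0] at h
  refine ⟨isAddCyclic_of_addOrderOf_eq_card ⟨b, hbmem⟩
    (by rw [AddSubgroup.addOrderOf_mk, hordb, hcard]), hcard, card_mho3 hn0, ?_⟩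
  rw [mho3_eq_zmultiples, AddSubgroup.zmultiples_le]
  exact ⟨hbz ▸ (commByA t).nsmul_mem hbmem _, three_nsmul_three_pow_pred_nsmul hn0 _⟩

/-- Let `P ≅ ℤ_{3^n} × ℤ_{3^{n-1}}` with `n > 1` and let `t` be an automorphism
of `P` of order 2 with `C_P(t)` cyclic of order `3^{n-1}`. Then `[P, t] ≅ ℤ_{3^n}` (cyclic of
order `3^n`), and `℧^{n-1}(P)` has order 3 and is contained in `[P, t] ⊓ Ω₁(P)`. -/
theorem stmt17 (n : ℕ) (hn : 1 < n)
    (t : AddAut (ZMod (3 ^ n) × ZMod (3 ^ (n - 1)))) (ht2 : t + t = 0) (ht1 : t ≠ 0)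
    (hcyc : IsAddCyclic (fixedByA t)) (hfixcard : Nat.card (fixedByA t) = 3 ^ (n - 1)) :
    IsAddCyclic (commByA t) ∧ Nat.card (commByA t) = 3 ^ n ∧
      Nat.card (mho3 (ZMod (3 ^ n) × ZMod (3 ^ (n - 1))) (n - 1)) = 3 ∧
      mho3 (ZMod (3 ^ n) × ZMod (3 ^ (n - 1))) (n - 1) ≤
        commByA t ⊓ omega3 (ZMod (3 ^ n) × ZMod (3 ^ (n - 1))) :=
  stmt17_general n hn t ht2 hfixcard
end

section
/- Let H = S·V₀ where V₀ = O_p(H) is a normal p-subgroup of H and S a p'-subgroup, and suppose g is an element normalizing S such that V₀^g ≠ V₀ and both V₀, V₀^g lie in an abelian p-group V. Then H and H^g are not conjugate in ⟨H, H^g⟩; in particular H is not pronormal in any group containing g. -/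
open scoped Pointwise

theorem conjSub_eq_toConjAct_smul_s19 {G : Type*} [Group G] (g : G) (K : Subgroup G) :
    conjSub g K = ConjAct.toConjAct g • K := rfl

namespace Subgroup

variable {G : Type*} [Group G] {p : ℕ} {N K : Subgroup G}

theorem mem_of_mem_sup_of_pow_eq_one [N.Normal] (hK : (Nat.card K).Coprime p) {x : G}
    (hx : x ∈ N ⊔ K) {n : ℕ} (hxn : x ^ p ^ n = 1) : x ∈ N := by
  have hKx : QuotientGroup.mk' N x ∈ K.map (QuotientGroup.mk' N) := by
    have := mem_map_of_mem (QuotientGroup.mk' N) hx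
    rwa [map_sup, QuotientGroup.map_mk'_self, bot_sup_eq] at this
  have hord : orderOf (QuotientGroup.mk' N x) = 1 :=
    Nat.eq_one_of_dvd_coprimes ((hK.coprime_dvd_left (card_map_dvd K _)).pow_right n)
      (orderOf_dvd_natCard _ hKx)
      (orderOf_dvd_of_pow_eq_one (by rw [← map_pow, hxn, map_one]))
  rwa [orderOf_eq_one_iff, QuotientGroup.mk'_apply, QuotientGroup.eq_one_iff] at hord

theorem _root_.IsPGroup.le_of_le_sup_of_le_normalizer {P : Subgroup G} (hP : IsPGroup p P)
    (hK : K ≤ normalizer (N : Set G)) (hKp : (Nat.card K).Coprime p) (hPNK : P ≤ N ⊔ K) :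
    P ≤ N := by
  have hNM : N ≤ N ⊔ K := le_sup_left
  have hKM : K ≤ N ⊔ K := le_sup_right
  have : (N.subgroupOf (N ⊔ K)).Normal :=
    (normal_subgroupOf_iff_le_normalizer hNM).2 (sup_le le_normalizer hK)
  intro x hx
  obtain ⟨n, hn⟩ := hP ⟨x, hx⟩
  refine mem_of_mem_sup_of_pow_eq_one (N := N.subgroupOf (N ⊔ K)) (K := K.subgroupOf (N ⊔ K))
    (x := ⟨x, hPNK hx⟩) ?_ ?_ (n := n) (Subtype.ext (by simpa using congrArg Subtype.val hn))
  · rwa [Nat.card_congr (subgroupOfEquivOfLe hKM).toEquiv]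
  · rw [← subgroupOf_sup hNM hKM, subgroupOf_self]
    exact mem_top _

theorem smul_eq_self_of_smul_sup_eq_self (hN : IsPGroup p N) (hK : K ≤ normalizer (N : Set G))
    (hKp : (Nat.card K).Coprime p) {c : ConjAct G} (hc : c • (N ⊔ K) = N ⊔ K) : c • N = N := by
  have hle : ∀ c : ConjAct G, c • (N ⊔ K) = N ⊔ K → c • N ≤ N := fun c hc =>
    (hN.of_equiv (equivSMul c N)).le_of_le_sup_of_le_normalizer hK hKp
      (hc ▸ pointwise_smul_le_pointwise_smul_iff.2 le_sup_left)
  refine le_antisymm (hle c hc) ?_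
  simpa only [smul_inv_smul] using
    pointwise_smul_le_pointwise_smul_iff (a := c).2 (hle c⁻¹ (by rw [inv_smul_eq_iff, hc]))

theorem smul_eq_smul_of_smul_sup_eq_smul_sup (hN : IsPGroup p N)
    (hK : K ≤ normalizer (N : Set G)) (hKp : (Nat.card K).Coprime p) {c d : ConjAct G}
    (hcd : c • (N ⊔ K) = d • (N ⊔ K)) : c • N = d • N := by
  rw [← inv_smul_eq_iff, smul_smul] at hcd ⊢
  exact smul_eq_self_of_smul_sup_eq_self hN hK hKp hcd

end Subgroup

open Subgroup in
theorem stmt19_general {G : Type*} [Group G] {p : ℕ}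
    (H S V₀ V : Subgroup G) (g : G)
    (hab : ∀ x ∈ V, ∀ y ∈ V, x * y = y * x) (hpV : IsPGroup p V)
    (h0V : V₀ ≤ V) (h0gV : conjSub g V₀ ≤ V)
    (hH : H = V₀ ⊔ S) (h0H : ∀ h ∈ H, conjSub h V₀ = V₀)
    (hS : Nat.Coprime (Nat.card S) p)
    (hgS : conjSub g S = S) (hg0 : conjSub g V₀ ≠ V₀) :
    (¬ ∃ x ∈ H ⊔ conjSub g H, conjSub x H = conjSub g H) ∧ ¬ IsPronormal H := by
  simp only [conjSub_eq_toConjAct_smul_s19] at h0gV h0H hgS hg0 ⊢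
  have hHN : H ≤ normalizer (V₀ : Set G) := fun h hh => conjAct_pointwise_smul_iff.1 (h0H h hh)
  have hVN : V ≤ normalizer (V₀ : Set G) := fun x hx =>
    centralizer_le_normalizer _ (mem_centralizer_iff.2 fun y hy => hab y (h0V hy) x hx)
  have hSN : S ≤ normalizer (V₀ : Set G) := (hH ▸ le_sup_right : S ≤ H).trans hHN
  have hgHN : ConjAct.toConjAct g • H ≤ normalizer (V₀ : Set G) := by
    rw [hH, smul_sup, hgS]
    exact sup_le (h0gV.trans hVN) hSN
  have hconj : ¬ ∃ x ∈ H ⊔ ConjAct.toConjAct g • H,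
      ConjAct.toConjAct x • H = ConjAct.toConjAct g • H := by
    rintro ⟨x, hx, hxH⟩
    refine hg0 (.trans ?_ (conjAct_pointwise_smul_eq_self (sup_le hHN hgHN hx)))
    rw [hH] at hxH
    exact (smul_eq_smul_of_smul_sup_eq_smul_sup (hpV.to_le h0V) hSN hS hxH).symm
  exact ⟨hconj, fun hpr => hconj (hpr g)⟩

/-- Let `H = S · V₀` where `V₀ = O_p(H)` is a normal `p`-subgroup of `H`
with `p'`-complement `S`, and let `g` normalize `S` with `V₀^g ≠ V₀`, both `V₀` and
`V₀^g` lying in an abelian `p`-group `V`. Then `H` and `H^g` are not conjugate in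
`⟨H, H^g⟩`; in particular `H` is not pronormal. -/
theorem stmt19 {G : Type*} [Group G] [Finite G] {p : ℕ} (hp : p.Prime)
    (H S V₀ V : Subgroup G) (g : G)
    (hab : ∀ x ∈ V, ∀ y ∈ V, x * y = y * x) (hpV : IsPGroup p V)
    (h0V : V₀ ≤ V) (h0gV : conjSub g V₀ ≤ V)
    (hH : H = V₀ ⊔ S) (h0H : ∀ h ∈ H, conjSub h V₀ = V₀) (hSV₀ : S ⊓ V₀ = ⊥)
    (hS : Nat.Coprime (Nat.card S) p)
    (hgS : conjSub g S = S) (hg0 : conjSub g V₀ ≠ V₀) :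
    (¬ ∃ x ∈ H ⊔ conjSub g H, conjSub x H = conjSub g H) ∧ ¬ IsPronormal H :=
  stmt19_general H S V₀ V g hab hpV h0V h0gV hH h0H hS hgS hg0
end
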